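/- arXiv:2012.08109 — 2 statements merged into one kernel-verified Lean document; each statement's English description precedes it below -/
import Mathlib

section
/- Let n ≥ 2 be an integer and θ ∈ (0,1). Then every cubature formula ν of strength 3 on S^{n-1} satisfies ‖ν‖_θ ≥ (2n)^{1−θ}. -/
open MeasureTheory Metric
open scoped ENNReal

noncomputable section

abbrev Sph (n : ℕ) : Type := Metric.sphere (0 : EuclideanSpace ℝ (Fin n)) 1

def sphMap {n : ℕ} (U : EuclideanSpace ℝ (Fin n) ≃ₗᵢ[ℝ] EuclideanSpace ℝ (Fin n)) :
    Sph n → Sph n := fun x =>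
  ⟨U x, by
    have hx : ‖(x : EuclideanSpace ℝ (Fin n))‖ = 1 := mem_sphere_zero_iff_norm.mp x.2
    simpa [mem_sphere_zero_iff_norm] using hx⟩

lemma sphMap_continuous {n : ℕ}
    (U : EuclideanSpace ℝ (Fin n) ≃ₗᵢ[ℝ] EuclideanSpace ℝ (Fin n)) :
    Continuous (sphMap U) :=
  (U.continuous.comp continuous_subtype_val).subtype_mk _

def antipode {n : ℕ} : Sph n → Sph n := fun x =>
  ⟨-(x : EuclideanSpace ℝ (Fin n)), by
    have hx : ‖(x : EuclideanSpace ℝ (Fin n))‖ = 1 := mem_sphere_zero_iff_norm.mp x.2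
    simpa [mem_sphere_zero_iff_norm] using hx⟩

/-- `σ` is invariant under all orthogonal transformations of `ℝⁿ`. -/
def IsRotationInvariant {n : ℕ} (σ : Measure (Sph n)) : Prop :=
  ∀ U : EuclideanSpace ℝ (Fin n) ≃ₗᵢ[ℝ] EuclideanSpace ℝ (Fin n),
    Measure.map (sphMap U) σ = σ

/-- Evaluation of a polynomial on `ℝⁿ` at a point of the sphere. -/
def polyEval {n : ℕ} (p : MvPolynomial (Fin n) ℝ) (x : Sph n) : ℝ :=
  MvPolynomial.eval (fun i => (x : EuclideanSpace ℝ (Fin n)) i) p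

/-- `ν` is finitely supported. -/
def IsFinSupported {n : ℕ} (ν : Measure (Sph n)) : Prop :=
  ∃ s : Finset (Sph n), ν ((↑s : Set (Sph n))ᶜ) = 0

/-- `ν` is a cubature formula of strength `t` w.r.t. the reference measure `σ`. -/
def IsCubature {n : ℕ} (t : ℕ) (σ ν : Measure (Sph n)) : Prop :=
  IsProbabilityMeasure ν ∧ IsFinSupported ν ∧
    ∀ p : MvPolynomial (Fin n) ℝ, p.totalDegree ≤ t →
      ∫ x, polyEval p x ∂ν = ∫ x, polyEval p x ∂σ

/-- `‖ν‖_θ = ∑ νᵢ^θ`, the sum of the `θ`-th powers of the point masses of `ν`. -/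
def thetaNorm {n : ℕ} (ν : Measure (Sph n)) (θ : ℝ) : ℝ :=
  ∑' u : Sph n, (ν {u}).toReal ^ θ

/-!
A cubature formula of strength 3 integrates the peak polynomial `(⟪ξ, x⟫² + ⟪ξ, x⟫³) / 2`
exactly. Written as `t² (1 + t) / 2` with `t = ⟪ξ, x⟫ ≥ -1`, it is nonnegative on the sphere;
it equals `1` at `ξ`, and rotation invariance gives it `σ`-integral `1 / (2n)`. Hence every
weight of `ν` is at most `1 / (2n)`. Since `t ↦ t ^ (θ - 1)` is decreasing, weights `wᵢ ≤ m`
summing to `1` satisfy `∑ wᵢ ^ θ = ∑ wᵢ · wᵢ ^ (θ - 1) ≥ m ^ (θ - 1)`.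
-/

open scoped RealInnerProductSpace

lemma Continuous.integrable_of_compactSpace {X : Type*} [TopologicalSpace X] [CompactSpace X]
    [MeasurableSpace X] [OpensMeasurableSpace X] {μ : Measure X} [IsFiniteMeasure μ]
    {f : X → ℝ} (hf : Continuous f) : Integrable f μ :=
  hf.integrable_of_hasCompactSupport (HasCompactSupport.of_compactSpace f)

lemma mul_rpow_sub_one_le_rpow {w m θ : ℝ} (hw : 0 ≤ w) (hwm : w ≤ m) (hθ0 : 0 < θ)
    (hθ1 : θ ≤ 1) : w * m ^ (θ - 1) ≤ w ^ θ := by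
  rcases hw.eq_or_lt with rfl | hw
  · simp [Real.zero_rpow hθ0.ne']
  · calc w * m ^ (θ - 1) ≤ w * w ^ (θ - 1) :=
          mul_le_mul_of_nonneg_left (Real.rpow_le_rpow_of_nonpos hw hwm (by linarith)) hw.le
      _ = w ^ θ := by rw [Real.rpow_sub_one hw.ne', mul_div_cancel₀ _ hw.ne']

lemma rpow_sub_one_le_sum_rpow {ι : Type*} (s : Finset ι) {w : ι → ℝ} {m θ : ℝ}
    (hw : ∀ i ∈ s, 0 ≤ w i) (hwm : ∀ i ∈ s, w i ≤ m) (hsum : ∑ i ∈ s, w i = 1)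
    (hθ0 : 0 < θ) (hθ1 : θ ≤ 1) : m ^ (θ - 1) ≤ ∑ i ∈ s, w i ^ θ :=
  calc m ^ (θ - 1) = ∑ i ∈ s, w i * m ^ (θ - 1) := by rw [← Finset.sum_mul, hsum, one_mul]
    _ ≤ ∑ i ∈ s, w i ^ θ :=
      Finset.sum_le_sum fun i hi => mul_rpow_sub_one_le_rpow (hw i hi) (hwm i hi) hθ0 hθ1

section FinitelySupported

variable {α : Type*} [MeasurableSpace α] {ν : Measure α} {s : Finset α}

lemma tsum_measureReal_singleton_rpow_eq_sum (hs : ν (↑s)ᶜ = 0) {θ : ℝ} (hθ : θ ≠ 0) :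
    ∑' u, ν.real {u} ^ θ = ∑ u ∈ s, ν.real {u} ^ θ := by
  refine tsum_eq_sum fun u hu => ?_
  have hu : ν {u} = 0 := measure_mono_null (by simpa using hu) hs
  rw [measureReal_def, hu, ENNReal.toReal_zero, Real.zero_rpow hθ]

lemma sum_measureReal_singleton_eq_one [MeasurableSingletonClass α] [IsProbabilityMeasure ν]
    (hs : ν (↑s)ᶜ = 0) : ∑ u ∈ s, ν.real {u} = 1 := by
  rw [sum_measureReal_singleton, measureReal_def,
    (prob_compl_eq_zero_iff s.measurableSet).mp hs, ENNReal.toReal_one]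

lemma measureReal_singleton_mul_le_integral [MeasurableSingletonClass α] {f : α → ℝ}
    (hf : Integrable f ν) (hf0 : 0 ≤ f) (a : α) : ν.real {a} * f a ≤ ∫ x, f x ∂ν := by
  rw [← smul_eq_mul, ← integral_singleton]
  exact setIntegral_le_integral hf (Filter.Eventually.of_forall hf0)

end FinitelySupported

section Sphere

open MvPolynomial

variable {n : ℕ}

local notation "E" => EuclideanSpace ℝ (Fin n)

lemma continuous_inner_sph (a : E) : Continuous fun x : Sph n => ⟪a, (x : E)⟫ :=
  continuous_const.inner continuous_subtype_val

lemma integral_comp_sphMap {σ : Measure (Sph n)} (hσ : IsRotationInvariant σ) (U : E ≃ₗᵢ[ℝ] E)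
    {g : Sph n → ℝ} (hg : Continuous g) : ∫ x, g (sphMap U x) ∂σ = ∫ x, g x ∂σ := by
  conv_rhs => rw [← hσ U]
  rw [integral_map (sphMap_continuous U).aemeasurable hg.aestronglyMeasurable]

lemma integral_inner_pow_of_odd {σ : Measure (Sph n)} (hσ : IsRotationInvariant σ) (a : E)
    {k : ℕ} (hk : Odd k) : ∫ x : Sph n, ⟪a, (x : E)⟫ ^ k ∂σ = 0 := by
  have h := integral_comp_sphMap hσ (LinearIsometryEquiv.neg ℝ)
    (g := fun x => ⟪a, (x : E)⟫ ^ k) ((continuous_inner_sph a).pow k)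
  have hodd : ∀ x : Sph n, ⟪a, ((sphMap (LinearIsometryEquiv.neg ℝ) x : Sph n) : E)⟫ ^ k =
      -⟪a, (x : E)⟫ ^ k := fun x => by
    change ⟪a, -(x : E)⟫ ^ k = _
    rw [inner_neg_right, hk.neg_pow]
  simp only [hodd, integral_neg] at h
  linarith

lemma integral_inner_sq_eq_of_norm_eq {σ : Measure (Sph n)} (hσ : IsRotationInvariant σ)
    {a b : E} (hab : ‖a‖ = ‖b‖) :
    ∫ x : Sph n, ⟪a, (x : E)⟫ ^ 2 ∂σ = ∫ x : Sph n, ⟪b, (x : E)⟫ ^ 2 ∂σ := by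
  set R : E ≃ₗᵢ[ℝ] E := Submodule.reflection (ℝ ∙ (a - b))ᗮ
  have hRa : R a = b := Submodule.reflection_sub hab
  have hswap : ∀ x : Sph n, ⟪a, ((sphMap R x : Sph n) : E)⟫ = ⟪b, (x : E)⟫ := fun x => by
    change ⟪a, R (x : E)⟫ = _
    rw [← hRa, ← R.inner_map_map, Submodule.reflection_reflection]
  rw [← integral_comp_sphMap hσ R (g := fun x => ⟪a, (x : E)⟫ ^ 2)
    ((continuous_inner_sph a).pow 2)]
  simp only [hswap]

lemma sum_sq_coord_eq_one (x : Sph n) : ∑ i, (x : E) i ^ 2 = 1 := by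
  rw [← EuclideanSpace.real_norm_sq_eq, mem_sphere_zero_iff_norm.mp x.2, one_pow]

lemma integral_inner_sq_of_norm_eq_one {σ : Measure (Sph n)} [IsProbabilityMeasure σ]
    (hσ : IsRotationInvariant σ) {a : E} (ha : ‖a‖ = 1) :
    ∫ x : Sph n, ⟪a, (x : E)⟫ ^ 2 ∂σ = (n : ℝ)⁻¹ := by
  have hcoord : ∀ i, ∫ x : Sph n, (x : E) i ^ 2 ∂σ = ∫ x : Sph n, ⟪a, (x : E)⟫ ^ 2 ∂σ :=
    fun i => by
      simpa [EuclideanSpace.inner_single_left] using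
        integral_inner_sq_eq_of_norm_eq hσ (a := EuclideanSpace.single i (1 : ℝ)) (b := a)
          (by simp [ha])
  have hsum : ∑ i, ∫ x : Sph n, (x : E) i ^ 2 ∂σ = 1 := by
    rw [← integral_finsetSum _ fun i _ => ?_]
    · simp [sum_sq_coord_eq_one]
    · exact ((continuous_apply i).comp ((PiLp.continuous_ofLp 2 _).comp
        continuous_subtype_val)).pow 2 |>.integrable_of_compactSpace
  simp only [hcoord, Finset.sum_const, Finset.card_univ, Fintype.card_fin, nsmul_eq_mul] at hsum
  exact eq_inv_of_mul_eq_one_right hsum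

lemma continuous_polyEval (p : MvPolynomial (Fin n) ℝ) : Continuous (polyEval (n := n) p) :=
  (continuous_eval p).comp ((PiLp.continuous_ofLp 2 _).comp continuous_subtype_val)

def linearForm (a : E) : MvPolynomial (Fin n) ℝ := ∑ i, C (a i) * X i

lemma totalDegree_linearForm_le (a : E) : (linearForm a).totalDegree ≤ 1 :=
  totalDegree_finsetSum_le fun _ _ => (totalDegree_mul _ _).trans (by simp [totalDegree_X])

lemma polyEval_linearForm (a : E) (x : Sph n) : polyEval (linearForm a) x = ⟪a, (x : E)⟫ := by
  simp [polyEval, linearForm, PiLp.inner_apply, mul_comm]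

def peakPoly (a : E) : MvPolynomial (Fin n) ℝ :=
  C (1 / 2) * (linearForm a ^ 2 + linearForm a ^ 3)

lemma totalDegree_peakPoly_le (a : E) : (peakPoly a).totalDegree ≤ 3 := by
  have hL := totalDegree_linearForm_le a
  refine (totalDegree_mul _ _).trans ?_
  rw [totalDegree_C, zero_add]
  refine (totalDegree_add _ _).trans (max_le ?_ ?_) <;>
    exact (totalDegree_pow _ _).trans (by omega)

lemma polyEval_peakPoly (a : E) (x : Sph n) :
    polyEval (peakPoly a) x = (⟪a, (x : E)⟫ ^ 2 + ⟪a, (x : E)⟫ ^ 3) / 2 := by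
  rw [← polyEval_linearForm]
  simp only [polyEval, peakPoly, map_mul, map_add, map_pow, eval_C]
  ring

lemma polyEval_peakPoly_nonneg {a : E} (ha : ‖a‖ ≤ 1) (x : Sph n) :
    0 ≤ polyEval (peakPoly a) x := by
  have hx : ‖(x : E)‖ = 1 := mem_sphere_zero_iff_norm.mp x.2
  have hlow : -1 ≤ ⟪a, (x : E)⟫ := by
    have := abs_real_inner_le_norm a (x : E)
    rw [hx, mul_one] at this
    linarith [neg_abs_le ⟪a, (x : E)⟫]
  rw [polyEval_peakPoly]
  nlinarith [sq_nonneg ⟪a, (x : E)⟫]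

lemma polyEval_peakPoly_self (ξ : Sph n) : polyEval (peakPoly (ξ : E)) ξ = 1 := by
  rw [polyEval_peakPoly, real_inner_self_eq_norm_sq, mem_sphere_zero_iff_norm.mp ξ.2]
  norm_num

lemma integral_polyEval_peakPoly {σ : Measure (Sph n)} [IsProbabilityMeasure σ]
    (hσ : IsRotationInvariant σ) {a : E} (ha : ‖a‖ = 1) :
    ∫ x, polyEval (peakPoly a) x ∂σ = (2 * n : ℝ)⁻¹ := by
  have hint : ∀ k : ℕ, Integrable (fun x : Sph n => ⟪a, (x : E)⟫ ^ k) σ := fun k =>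
    ((continuous_inner_sph a).pow k).integrable_of_compactSpace
  simp only [polyEval_peakPoly]
  rw [integral_div, integral_add (hint 2) (hint 3), integral_inner_sq_of_norm_eq_one hσ ha,
    integral_inner_pow_of_odd hσ a (by decide), add_zero, mul_inv, div_eq_mul_inv, mul_comm]

lemma IsCubature.measureReal_singleton_le {σ ν : Measure (Sph n)}
    [IsProbabilityMeasure σ] (hσ : IsRotationInvariant σ) (hν : IsCubature 3 σ ν)
    (ξ : Sph n) : ν.real {ξ} ≤ (2 * n : ℝ)⁻¹ := by
  have := hν.1
  have hξ : ‖(ξ : E)‖ = 1 := mem_sphere_zero_iff_norm.mp ξ.2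
  calc ν.real {ξ} = ν.real {ξ} * polyEval (peakPoly (ξ : E)) ξ := by
        rw [polyEval_peakPoly_self, mul_one]
    _ ≤ ∫ x, polyEval (peakPoly (ξ : E)) x ∂ν :=
        measureReal_singleton_mul_le_integral (continuous_polyEval _).integrable_of_compactSpace
          (polyEval_peakPoly_nonneg hξ.le) ξ
    _ = ∫ x, polyEval (peakPoly (ξ : E)) x ∂σ :=
        hν.2.2 _ (totalDegree_peakPoly_le _)
    _ = (2 * n : ℝ)⁻¹ := integral_polyEval_peakPoly hσ hξ

end Sphere

theorem stmt5_general (n : ℕ)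
    (σ : Measure (Sph n)) [IsProbabilityMeasure σ] (hσ : IsRotationInvariant σ)
    (ν : Measure (Sph n)) (hν : IsCubature 3 σ ν)
    (θ : ℝ) (hθ : θ ∈ Set.Ioo (0 : ℝ) 1) :
    ((2 * n : ℕ) : ℝ) ^ (1 - θ) ≤ thetaNorm ν θ := by
  obtain ⟨hθ0, hθ1⟩ := hθ
  have := hν.1
  obtain ⟨s, hs⟩ := hν.2.1
  calc ((2 * n : ℕ) : ℝ) ^ (1 - θ) = (2 * n : ℝ)⁻¹ ^ (θ - 1) := by
        rw [Real.inv_rpow (by positivity), ← Real.rpow_neg (by positivity), neg_sub]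
        push_cast
        rfl
    _ ≤ ∑ u ∈ s, ν.real {u} ^ θ :=
      rpow_sub_one_le_sum_rpow s (fun _ _ => measureReal_nonneg)
        (fun u _ => hν.measureReal_singleton_le hσ u) (sum_measureReal_singleton_eq_one hs)
        hθ0 hθ1.le
    _ = thetaNorm ν θ := (tsum_measureReal_singleton_rpow_eq_sum hs hθ0.ne').symm

theorem stmt5 (n : ℕ) (hn : 2 ≤ n)
    (σ : Measure (Sph n)) [IsProbabilityMeasure σ] (hσ : IsRotationInvariant σ)
    (ν : Measure (Sph n)) (hν : IsCubature 3 σ ν)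
    (θ : ℝ) (hθ : θ ∈ Set.Ioo (0 : ℝ) 1) :
    ((2 * n : ℕ) : ℝ) ^ (1 - θ) ≤ thetaNorm ν θ :=
  stmt5_general n σ hσ ν hν θ hθ
end
end

section
/- For every integer n ≥ 2 there exists a constant C > 0 such that for every integer t ≥ 1 and every θ ∈ (0,1) there exists a cubature formula ν of strength t on S^{n-1} with ‖ν‖_θ ≤ (C·t^{n−1})^{1−θ}. -/
open MeasureTheory Metric
open scoped ENNReal

noncomputable section

/-! Restricted to the sphere, the polynomials of degree at most `t` are spanned by the monomials
`x^a` with `a ℓ ≤ 1` and all other exponents at most `t`, because `x_ℓ² = 1 - ∑_{i ≠ ℓ} x_i²`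
there; there are `2 (t + 1)^(n - 1)` of them. By Tchakaloff's argument (the `σ`-mean of the
vector of these monomials lies in the convex hull of its compact image, then Carathéodory) `σ`
agrees on them with a convex combination of `N ≤ 2 (t + 1)^(n - 1) + 1` point masses, and for
`N` weights summing to one, concavity of `x ↦ x^θ` gives `∑ wᵢ^θ ≤ N^(1 - θ)`. -/

open Set Finset

theorem exists_fin_of_mem_convexHull {𝕜 E : Type*} [Field 𝕜] [LinearOrder 𝕜]
    [IsStrictOrderedRing 𝕜] [AddCommGroup E] [Module 𝕜 E] [FiniteDimensional 𝕜 E] {s : Set E}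
    {x : E} (hx : x ∈ convexHull 𝕜 s) :
    ∃ (N : ℕ) (z : Fin N → E) (w : Fin N → 𝕜), N ≤ Module.finrank 𝕜 E + 1 ∧
      Function.Injective z ∧ range z ⊆ s ∧ (∀ i, 0 < w i) ∧ ∑ i, w i = 1 ∧
      ∑ i, w i • z i = x := by
  obtain ⟨ι, _, z, w, hzs, hz, hw, hw1, hwz⟩ := eq_pos_convex_span_of_mem_convexHull hx
  let e := Fintype.equivFin ι
  refine ⟨Fintype.card ι, z ∘ e.symm, w ∘ e.symm, ?_, hz.injective.comp e.symm.injective,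
    (range_comp_subset_range _ _).trans hzs, fun i => hw _, ?_, ?_⟩
  · exact hz.card_le_finrank_succ.trans (Nat.succ_le_succ (Submodule.finrank_le _))
  · simpa only [Function.comp_apply, e.symm.sum_comp w] using hw1
  · simpa only [Function.comp_apply, e.symm.sum_comp (fun i => w i • z i)] using hwz

theorem IsCompact.convexHull_of_finiteDimensional {E : Type*} [AddCommGroup E] [Module ℝ E]
    [TopologicalSpace E] [IsTopologicalAddGroup E] [ContinuousSMul ℝ E] [FiniteDimensional ℝ E]
    {s : Set E} (hs : IsCompact s) : IsCompact (convexHull ℝ s) := by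
  let Φ (N : ℕ) (p : (Fin N → ℝ) × (Fin N → E)) : E := ∑ i, p.1 i • p.2 i
  have hΦ (N : ℕ) : Continuous (Φ N) := by fun_prop
  suffices convexHull ℝ s = ⋃ N ∈ Finset.range (Module.finrank ℝ E + 2),
      Φ N '' (stdSimplex ℝ (Fin N) ×ˢ univ.pi fun _ => s) by
    rw [this]
    exact (Finset.range _).isCompact_biUnion fun N _ =>
      ((isCompact_stdSimplex ℝ (Fin N)).prod (isCompact_univ_pi fun _ => hs)).image (hΦ N)
  apply Set.Subset.antisymm
  · intro x hx
    obtain ⟨N, z, w, hN, -, hzs, hw, hw1, hwz⟩ := exists_fin_of_mem_convexHull hx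
    simp only [mem_iUnion, Finset.mem_range]
    exact ⟨N, by omega, (w, z), ⟨⟨fun i => (hw i).le, hw1⟩, fun i _ => hzs (mem_range_self i)⟩, hwz⟩
  · simp only [iUnion_subset_iff]
    rintro N - _ ⟨⟨w, z⟩, ⟨⟨hw, hw1⟩, hz⟩, rfl⟩
    exact (convex_convexHull ℝ s).sum_mem (fun i _ => hw i) hw1
      fun i _ => subset_convexHull ℝ s (hz i trivial)

theorem Finset.sum_rpow_le_card_rpow_mul_rpow_sum {ι : Type*} (s : Finset ι) {f : ι → ℝ}
    (hf : ∀ i ∈ s, 0 ≤ f i) {θ : ℝ} (hθ₀ : 0 ≤ θ) (hθ₁ : θ ≤ 1) :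
    ∑ i ∈ s, f i ^ θ ≤ (#s : ℝ) ^ (1 - θ) * (∑ i ∈ s, f i) ^ θ := by
  rcases s.eq_empty_or_nonempty with rfl | hs
  · simp only [Finset.sum_empty, Finset.card_empty, Nat.cast_zero]; positivity
  have hN : (0 : ℝ) < #s := by exact_mod_cast hs.card_pos
  have jensen := (Real.concaveOn_rpow hθ₀ hθ₁).le_map_sum (t := s) (w := fun _ => (#s : ℝ)⁻¹)
    (p := f) (fun _ _ => by positivity) (by simp [hN.ne']) hf
  simp only [smul_eq_mul, ← Finset.mul_sum] at jensen
  rw [Real.mul_rpow (by positivity) (Finset.sum_nonneg hf), Real.inv_rpow hN.le,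
    inv_mul_le_iff₀ hN, ← mul_assoc] at jensen
  rwa [Real.rpow_sub hN, Real.rpow_one, div_eq_mul_inv]

section DiracSum

variable {X κ : Type*} [MeasurableSpace X] [MeasurableSingletonClass X] [Fintype κ]
  {ξ : κ → X} {w : κ → ℝ}

theorem sum_dirac_apply (ξ : κ → X) (w : κ → ℝ) (A : Set X) :
    (∑ i, ENNReal.ofReal (w i) • Measure.dirac (ξ i)) A =
      ∑ i, ENNReal.ofReal (w i) * A.indicator 1 (ξ i) := by
  simp only [Measure.coe_finsetSum, Finset.sum_apply, Measure.smul_apply, smul_eq_mul,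
    Measure.dirac_apply]

theorem isProbabilityMeasure_sum_dirac (hw : ∀ i, 0 ≤ w i) (hw₁ : ∑ i, w i = 1) :
    IsProbabilityMeasure (∑ i, ENNReal.ofReal (w i) • Measure.dirac (ξ i)) := by
  constructor
  rw [sum_dirac_apply]
  simp only [Set.indicator_univ, Pi.one_apply, mul_one]
  rw [← ENNReal.ofReal_sum_of_nonneg fun i _ => hw i, hw₁, ENNReal.ofReal_one]

theorem sum_dirac_compl_range (ξ : κ → X) (w : κ → ℝ) :
    (∑ i, ENNReal.ofReal (w i) • Measure.dirac (ξ i)) (range ξ)ᶜ = 0 := by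
  simp [sum_dirac_apply]

theorem integral_sum_dirac (hw : ∀ i, 0 ≤ w i) (g : X → ℝ) :
    ∫ x, g x ∂(∑ i, ENNReal.ofReal (w i) • Measure.dirac (ξ i)) = ∑ i, w i * g (ξ i) := by
  rw [integral_finsetSum_measure fun i _ => (integrable_dirac (by simp)).smul_measure
    ENNReal.ofReal_ne_top]
  simp only [integral_smul_measure, integral_dirac, ENNReal.toReal_ofReal (hw _), smul_eq_mul]

theorem tsum_sum_dirac_singleton_rpow (hξ : Function.Injective ξ) (hw : ∀ i, 0 ≤ w i)
    {θ : ℝ} (hθ : θ ≠ 0) :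
    ∑' u, ((∑ i, ENNReal.ofReal (w i) • Measure.dirac (ξ i)) {u}).toReal ^ θ =
      ∑ i, w i ^ θ := by
  classical
  have hatom (u : X) : (∑ i, ENNReal.ofReal (w i) • Measure.dirac (ξ i)) {u} =
      ∑ i, if ξ i = u then ENNReal.ofReal (w i) else 0 := by
    simp [sum_dirac_apply, Set.indicator_apply]
  rw [tsum_eq_sum (s := univ.image ξ) fun u hu => by
      simp_all [Real.zero_rpow hθ], Finset.sum_image fun i _ j _ h => hξ h]
  refine Finset.sum_congr rfl fun i _ => ?_
  simp [hatom, hξ.eq_iff, ENNReal.toReal_ofReal (hw i)]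

end DiracSum

section Tchakaloff

variable {X : Type*} [TopologicalSpace X] [CompactSpace X] [MeasurableSpace X]
  [OpensMeasurableSpace X]

theorem exists_weighted_points_integral_eq {ι : Type*} [Fintype ι] (μ : Measure X)
    [IsProbabilityMeasure μ] {f : ι → X → ℝ} (hf : ∀ j, Continuous (f j)) :
    ∃ (N : ℕ) (ξ : Fin N → X) (w : Fin N → ℝ), N ≤ Fintype.card ι + 1 ∧
      Function.Injective ξ ∧ (∀ i, 0 < w i) ∧ ∑ i, w i = 1 ∧
      ∀ j, ∑ i, w i * f j (ξ i) = ∫ x, f j x ∂μ := by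
  let F : X → ι → ℝ := fun x j => f j x
  have hF : Continuous F := continuous_pi hf
  have hFμ : Integrable F μ := hF.integrable_of_hasCompactSupport (.of_compactSpace F)
  have hmean : ∫ x, F x ∂μ ∈ convexHull ℝ (range F) :=
    (convex_convexHull ℝ _).integral_mem
      (isCompact_range hF).convexHull_of_finiteDimensional.isClosed
      (ae_of_all _ fun x => subset_convexHull ℝ _ (mem_range_self x)) hFμ
  obtain ⟨N, z, w, hN, hz, hzF, hw, hw₁, hwz⟩ := exists_fin_of_mem_convexHull hmean
  choose ξ hξ using fun i => hzF (mem_range_self i)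
  have hzξ : z = F ∘ ξ := funext fun i => (hξ i).symm
  subst hzξ
  refine ⟨N, ξ, w, by simpa using hN, hz.of_comp, hw, hw₁, fun j => ?_⟩
  rw [← eval_integral (fun j => hFμ.eval j), ← hwz]
  simp [F]

theorem integral_eq_of_mem_span {μ ν : Measure X} [IsFiniteMeasure μ] [IsFiniteMeasure ν]
    {S : Set (X → ℝ)} (hS : ∀ f ∈ S, Continuous f ∧ ∫ x, f x ∂ν = ∫ x, f x ∂μ)
    {g : X → ℝ} (hg : g ∈ Submodule.span ℝ S) : ∫ x, g x ∂ν = ∫ x, g x ∂μ := by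
  have hint {f : X → ℝ} (hf : Continuous f) (ρ : Measure X) [IsFiniteMeasure ρ] :
      Integrable f ρ :=
    hf.integrable_of_hasCompactSupport (.of_compactSpace f)
  suffices Continuous g ∧ ∫ x, g x ∂ν = ∫ x, g x ∂μ from this.2
  induction hg using Submodule.span_induction with
  | mem f hf => exact hS f hf
  | zero => exact ⟨continuous_zero, by simp⟩
  | add f g _ _ hf hg =>
    refine ⟨hf.1.add hg.1, ?_⟩
    simp only [Pi.add_apply, integral_add (hint hf.1 _) (hint hg.1 _), hf.2, hg.2]
  | smul c f _ hf =>
    refine ⟨hf.1.const_smul c, ?_⟩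
    simp only [Pi.smul_apply, smul_eq_mul, integral_const_mul, hf.2]

end Tchakaloff

section SphereMonomials

variable {n : ℕ}

def sphereMonomial (a : Fin n → ℕ) (x : Sph n) : ℝ :=
  ∏ i, (x : EuclideanSpace ℝ (Fin n)) i ^ a i

theorem continuous_sphereMonomial (a : Fin n → ℕ) : Continuous (sphereMonomial a) := by
  unfold sphereMonomial
  fun_prop

theorem polyEval_eq_sum_sphereMonomial (p : MvPolynomial (Fin n) ℝ) :
    polyEval p = ∑ d ∈ p.support, p.coeff d • sphereMonomial d := by
  ext x
  simp only [polyEval, MvPolynomial.eval_eq', Finset.sum_apply, Pi.smul_apply, smul_eq_mul,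
    sphereMonomial]

theorem sum_sq_coord_sphere (x : Sph n) : ∑ i, (x : EuclideanSpace ℝ (Fin n)) i ^ 2 = 1 := by
  rw [← EuclideanSpace.real_norm_sq_eq, norm_eq_of_mem_sphere x, one_pow]

theorem sphereMonomial_add_single (a : Fin n → ℕ) (i : Fin n) (k : ℕ) (x : Sph n) :
    sphereMonomial (a + Pi.single i k) x =
      sphereMonomial a x * (x : EuclideanSpace ℝ (Fin n)) i ^ k := by
  simp only [sphereMonomial, Pi.add_apply, pow_add, Finset.prod_mul_distrib]
  congr 1
  rw [Fintype.prod_eq_single i fun j hj => by simp [hj], Pi.single_eq_same]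

theorem sphereMonomial_add_single_two (a : Fin n → ℕ) (ℓ : Fin n) :
    sphereMonomial (a + Pi.single ℓ 2) =
      sphereMonomial a - ∑ i ∈ univ.erase ℓ, sphereMonomial (a + Pi.single i 2) := by
  ext x
  simp only [Pi.sub_apply, Finset.sum_apply, sphereMonomial_add_single, ← Finset.mul_sum]
  rw [eq_sub_iff_add_eq, ← mul_add,
    Finset.add_sum_erase _ (fun i => (x : EuclideanSpace ℝ (Fin n)) i ^ 2) (mem_univ ℓ),
    sum_sq_coord_sphere, mul_one]

def reducedExponents (n t : ℕ) (ℓ : Fin n) : Finset (Fin n → ℕ) :=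
  Fintype.piFinset fun i => Finset.range (if i = ℓ then 2 else t + 1)

theorem card_reducedExponents (t : ℕ) (ℓ : Fin n) :
    #(reducedExponents n t ℓ) = 2 * (t + 1) ^ (n - 1) := by
  rw [reducedExponents, Fintype.card_piFinset, Fintype.prod_eq_mul_prod_compl ℓ]
  simp only [card_range]
  rw [if_true, Finset.prod_congr rfl fun i hi => if_neg (by simpa using hi), prod_const,
    card_compl, Finset.card_singleton, Fintype.card_fin]

theorem sphereMonomial_mem_span {t : ℕ} (ℓ : Fin n) {a : Fin n → ℕ} (ha : ∑ i, a i ≤ t) :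
    sphereMonomial a ∈ Submodule.span ℝ (sphereMonomial '' reducedExponents n t ℓ) := by
  induction hk : a ℓ using Nat.strong_induction_on generalizing a with
  | _ k ih =>
  by_cases h : a ℓ ≤ 1
  · refine Submodule.subset_span ⟨a, ?_, rfl⟩
    simp only [reducedExponents, Finset.mem_coe, Fintype.mem_piFinset, Finset.mem_range]
    intro i
    split_ifs with hi
    · rw [hi]
      omega
    · exact Nat.lt_succ_of_le ((single_le_sum (fun j _ => Nat.zero_le _) (mem_univ i)).trans ha)
  obtain ⟨b, rfl⟩ : ∃ b, a = b + Pi.single ℓ 2 := ⟨a - Pi.single ℓ 2, by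
    ext i
    rcases eq_or_ne i ℓ with rfl | hi
    · simp only [Pi.add_apply, Pi.sub_apply, Pi.single_eq_same]
      omega
    · simp [hi]⟩
  have hdeg (i : Fin n) : ∑ j, (b + Pi.single i 2 : Fin n → ℕ) j = ∑ j, b j + 2 := by
    simp [Finset.sum_add_distrib]
  have hbk : b ℓ < k := by simp at hk; omega
  rw [sphereMonomial_add_single_two]
  refine sub_mem (ih _ hbk (by linarith [hdeg ℓ]) rfl) (sum_mem fun i hi => ?_)
  exact ih _ hbk (by rw [hdeg]; linarith [hdeg ℓ]) (by simp [(ne_of_mem_erase hi).symm])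

theorem polyEval_mem_span {t : ℕ} (ℓ : Fin n) {p : MvPolynomial (Fin n) ℝ}
    (hp : p.totalDegree ≤ t) :
    polyEval p ∈ Submodule.span ℝ (sphereMonomial '' reducedExponents n t ℓ) := by
  rw [polyEval_eq_sum_sphereMonomial]
  refine sum_mem fun d hd => Submodule.smul_mem _ _ (sphereMonomial_mem_span ℓ ?_)
  have := MvPolynomial.le_totalDegree hd
  rw [Finsupp.sum_fintype _ _ fun _ => rfl] at this
  omega

end SphereMonomials

theorem two_mul_succ_pow_add_one_le {t : ℕ} (ht : 1 ≤ t) (m : ℕ) :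
    2 * (t + 1) ^ m + 1 ≤ 4 * 2 ^ m * t ^ m := by
  have h₁ : (t + 1) ^ m ≤ 2 ^ m * t ^ m := by
    rw [← mul_pow]
    exact Nat.pow_le_pow_left (by omega) m
  have h₂ : 1 ≤ 2 ^ m * t ^ m := Nat.one_le_iff_ne_zero.mpr (by positivity)
  linarith

theorem stmt12_general (n : ℕ) (hn : 2 ≤ n)
    (σ : Measure (Sph n)) [IsProbabilityMeasure σ] :
    ∃ C : ℝ, 0 < C ∧ ∀ t : ℕ, 1 ≤ t → ∀ θ : ℝ, θ ∈ Set.Ioo (0 : ℝ) 1 →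
      ∃ ν : Measure (Sph n), IsCubature t σ ν ∧
        thetaNorm ν θ ≤ (C * (t : ℝ) ^ (n - 1)) ^ (1 - θ) := by
  refine ⟨4 * 2 ^ (n - 1), by positivity, fun t ht θ ⟨hθ₀, hθ₁⟩ => ?_⟩
  let ℓ : Fin n := ⟨0, by omega⟩
  obtain ⟨N, ξ, w, hN, hξ, hw, hw₁, hmoments⟩ := exists_weighted_points_integral_eq σ
    (f := fun a : reducedExponents n t ℓ => sphereMonomial a) fun a => continuous_sphereMonomial a.1
  have hw₀ (i : Fin N) : 0 ≤ w i := (hw i).le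
  have hNC : (N : ℝ) ≤ 4 * 2 ^ (n - 1) * t ^ (n - 1) := by
    have := two_mul_succ_pow_add_one_le ht (n - 1)
    rw [Fintype.card_coe, card_reducedExponents] at hN
    exact_mod_cast hN.trans this
  have hν := isProbabilityMeasure_sum_dirac (ξ := ξ) hw₀ hw₁
  refine ⟨∑ i, ENNReal.ofReal (w i) • Measure.dirac (ξ i),
    ⟨hν, ⟨univ.image ξ, by simp [sum_dirac_compl_range]⟩,
      fun p hp => integral_eq_of_mem_span ?_ (polyEval_mem_span ℓ hp)⟩, ?_⟩
  · rintro _ ⟨a, ha, rfl⟩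
    exact ⟨continuous_sphereMonomial a, (integral_sum_dirac hw₀ _).trans (hmoments ⟨a, ha⟩)⟩
  calc thetaNorm _ θ = ∑ i, w i ^ θ := tsum_sum_dirac_singleton_rpow hξ hw₀ hθ₀.ne'
    _ ≤ (N : ℝ) ^ (1 - θ) := by
      simpa [hw₁] using univ.sum_rpow_le_card_rpow_mul_rpow_sum (fun i _ => hw₀ i) hθ₀.le hθ₁.le
    _ ≤ _ := Real.rpow_le_rpow (Nat.cast_nonneg N) hNC (by linarith)

theorem stmt12 (n : ℕ) (hn : 2 ≤ n)
    (σ : Measure (Sph n)) [IsProbabilityMeasure σ] (hσ : IsRotationInvariant σ) :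
    ∃ C : ℝ, 0 < C ∧ ∀ t : ℕ, 1 ≤ t → ∀ θ : ℝ, θ ∈ Set.Ioo (0 : ℝ) 1 →
      ∃ ν : Measure (Sph n), IsCubature t σ ν ∧
        thetaNorm ν θ ≤ (C * (t : ℝ) ^ (n - 1)) ^ (1 - θ) :=
  stmt12_general n hn σ
end
end
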